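/- The functions t₃ and s = (1 − t₃²Y₃)^{1/t₃²}(Y₃ − X₃²) are functionally independent first integrals of the 2-form σ̃₃: wherever defined (t₃ ≠ 0, |t₃²Y₃| < 1), one has ds ∧ dt₃ = c·σ̃₃ for a nonvanishing function c; in particular the kernel directions of σ̃₃ are tangent to the level sets {t₃ = const, s = const}. -/

import Mathlib

/-! With `a = t₃²` and `p = 1/a`, the factor `(1 - aY)^p` has `Y`-derivative `-(1 - aY)^(p-1)`,
since `a p = 1`. Both partial derivatives of `s` therefore share the factor `(1 - aY)^(p-1)`,
which is positive when `aY < 1`, and what remains are (up to sign) the coefficients of `σ̃₃`. -/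

open Real

lemma hasDerivAt_one_sub_mul_rpow_inv {a : ℝ} (ha : a ≠ 0) {y : ℝ} (hy : 1 - a * y ≠ 0) :
    HasDerivAt (fun y => (1 - a * y) ^ (1 / a)) (-(1 - a * y) ^ (1 / a - 1)) y := by
  have hlin : HasDerivAt (fun y => 1 - a * y) (-a) y := by
    simpa using ((hasDerivAt_id y).const_mul a).const_sub 1
  refine ((hasDerivAt_rpow_const (p := 1 / a) (Or.inl hy)).comp y hlin).congr_deriv ?_
  field_simp

lemma hasDerivAt_const_mul_sub_sq (K Y X : ℝ) :
    HasDerivAt (fun X => K * (Y - X ^ 2)) (-(2 * X * K)) X := by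
  refine (((hasDerivAt_pow 2 X).const_sub Y).const_mul K).congr_deriv ?_
  ring

lemma hasDerivAt_one_sub_mul_rpow_inv_mul_sub_sq {a : ℝ} (ha : a ≠ 0) (X : ℝ) {Y : ℝ}
    (hY : 1 - a * Y ≠ 0) :
    HasDerivAt (fun Y => (1 - a * Y) ^ (1 / a) * (Y - X ^ 2))
      ((1 - a * Y) ^ (1 / a - 1) * (1 + X ^ 2 - Y - a * Y)) Y := by
  refine ((hasDerivAt_one_sub_mul_rpow_inv ha hY).mul
    ((hasDerivAt_id Y).sub_const (X ^ 2))).congr_deriv ?_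
  rw [rpow_sub_one hY, id]
  field_simp
  ring

/-- The coefficients of `ds ∧ dt₃` in the basis `dt₃ ∧ dX₃`, `dt₃ ∧ dY₃` are
`-∂s/∂X₃` and `-∂s/∂Y₃`. -/
theorem stmt17 (t₃ X₃ Y₃ : ℝ) (ht : t₃ ≠ 0) (h : |t₃ ^ 2 * Y₃| < 1)
    (s : ℝ → ℝ → ℝ → ℝ)
    (hs : ∀ t X Y, s t X Y = (1 - t ^ 2 * Y) ^ ((1 : ℝ) / t ^ 2) * (Y - X ^ 2))
    (c : ℝ) (hc : c = (1 / 2) * (1 - t₃ ^ 2 * Y₃) ^ ((1 : ℝ) / t₃ ^ 2 - 1)) :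
    c ≠ 0 ∧
    -(deriv (fun X => s t₃ X Y₃) X₃) = c * (4 * X₃ * (1 - t₃ ^ 2 * Y₃)) ∧
    -(deriv (fun Y => s t₃ X₃ Y) Y₃)
      = c * (-(2 * (1 + X₃ ^ 2 - Y₃ - t₃ ^ 2 * Y₃))) := by
  have hpos : 0 < 1 - t₃ ^ 2 * Y₃ := by linarith [(abs_lt.mp h).2]
  have ht2 : t₃ ^ 2 ≠ 0 := pow_ne_zero 2 ht
  simp_rw [hs]
  subst hc
  refine ⟨by positivity, ?_, ?_⟩
  · rw [(hasDerivAt_const_mul_sub_sq _ Y₃ X₃).deriv, rpow_sub_one hpos.ne']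
    field_simp
    ring
  · rw [(hasDerivAt_one_sub_mul_rpow_inv_mul_sub_sq ht2 X₃ hpos.ne').deriv]
    ring
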